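/- arXiv:2110.08705 — 6 statements merged into one kernel-verified Lean document; each statement's English description precedes it below -/
import Mathlib

section
/- Let Ω₁ > 0, Ω₂ > 0 and δ ∈ (0,1). Let V : [0,∞) → ℝ be a differentiable function with V(t) ≥ 0 for all t, satisfying the differential inequality V'(t) ≤ −Ω₁ V(t) − Ω₂ V(t)^δ for all t ≥ 0. Then V(t) = 0 for every t ≥ t_s, where t_s = (1/(Ω₁(1−δ))) · ln(1 + (Ω₁/Ω₂) · V(0)^{1−δ}). -/
/-- Finite-time stability lemma ("theorem 1" of the paper) with the
settling-time bound of equation (38): if `V ≥ 0` is differentiable on `[0,∞)`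
and satisfies `V' ≤ -Ω₁ V - Ω₂ V^δ` there, then `V` vanishes for all
`t ≥ tₛ = (1/(Ω₁(1-δ))) * log (1 + (Ω₁/Ω₂) V(0)^(1-δ))`. -/
theorem finite_time_stability
    (Ω₁ Ω₂ δ : ℝ) (hΩ₁ : 0 < Ω₁) (hΩ₂ : 0 < Ω₂) (hδ : δ ∈ Set.Ioo (0 : ℝ) 1)
    (V : ℝ → ℝ)
    (hVnonneg : ∀ t, 0 ≤ t → 0 ≤ V t)
    (hVdiff : ∀ t, 0 ≤ t → DifferentiableAt ℝ V t)
    (hVineq : ∀ t, 0 ≤ t → deriv V t ≤ -Ω₁ * V t - Ω₂ * (V t) ^ δ) :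
    ∀ t, (1 / (Ω₁ * (1 - δ))) * Real.log (1 + (Ω₁ / Ω₂) * (V 0) ^ (1 - δ)) ≤ t →
      V t = 0 := by
  obtain ⟨hδ0, hδ1⟩ := hδ
  have hc : 0 < Ω₁ * (1 - δ) := mul_pos hΩ₁ (by linarith)
  set L : ℝ := Real.log (1 + (Ω₁ / Ω₂) * (V 0) ^ (1 - δ)) with hL
  have hV0pow : 0 ≤ (V 0) ^ (1 - δ) := Real.rpow_nonneg (hVnonneg 0 le_rfl) _
  have hLnonneg : 0 ≤ L := Real.log_nonneg (by
    have : 0 ≤ (Ω₁ / Ω₂) * (V 0) ^ (1 - δ) :=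
      mul_nonneg (div_nonneg hΩ₁.le hΩ₂.le) hV0pow
    linarith)
  -- V is antitone on [0,∞)
  have hderivnonpos : ∀ s, 0 ≤ s → deriv V s ≤ 0 := by
    intro s hs
    have h1 := hVineq s hs
    have h2 : 0 ≤ Ω₁ * V s := mul_nonneg hΩ₁.le (hVnonneg s hs)
    have h3 : 0 ≤ Ω₂ * (V s) ^ δ :=
      mul_nonneg hΩ₂.le (Real.rpow_nonneg (hVnonneg s hs) δ)
    linarith
  have hVanti : AntitoneOn V (Set.Ici (0 : ℝ)) := by
    apply antitoneOn_of_deriv_nonpos (convex_Ici 0)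
    · exact fun s hs => (hVdiff s hs).continuousAt.continuousWithinAt
    · rw [interior_Ici]
      exact fun s hs => (hVdiff s (le_of_lt hs)).differentiableWithinAt
    · rw [interior_Ici]
      exact fun s hs => hderivnonpos s (le_of_lt hs)
  intro t hts
  have htnonneg : 0 ≤ t := le_trans (mul_nonneg (by positivity) hLnonneg) hts
  by_contra hne
  have hVtpos : 0 < V t := lt_of_le_of_ne (hVnonneg t htnonneg) (Ne.symm hne)
  -- V is positive on [0, t]
  have hVpos : ∀ s ∈ Set.Icc (0 : ℝ) t, 0 < V s := by
    intro s hs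
    exact lt_of_lt_of_le hVtpos (hVanti hs.1 htnonneg hs.2)
  -- the auxiliary function h
  set g : ℝ → ℝ := fun s => Real.log (Ω₂ + Ω₁ * (V s) ^ (1 - δ)) with hg
  set h : ℝ → ℝ := fun s => g s + (Ω₁ * (1 - δ)) * s with hh
  have hDpos : ∀ s ∈ Set.Icc (0 : ℝ) t, 0 < Ω₂ + Ω₁ * (V s) ^ (1 - δ) := by
    intro s hs
    have := Real.rpow_nonneg (hVnonneg s hs.1) (1 - δ)
    nlinarith
  -- h is antitone on [0, t]
  have hhd : ∀ s ∈ Set.Ioo (0 : ℝ) t,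
      HasDerivAt h ((Ω₁ * (deriv V s * (1 - δ) * (V s) ^ (1 - δ - 1))) /
        (Ω₂ + Ω₁ * (V s) ^ (1 - δ)) + (Ω₁ * (1 - δ)) * 1) s := by
    intro s hs
    have hs0 : (0:ℝ) ≤ s := hs.1.le
    have hVspos : 0 < V s := hVpos s ⟨hs0, hs.2.le⟩
    have hV' : HasDerivAt V (deriv V s) s := (hVdiff s hs0).hasDerivAt
    have hpow : HasDerivAt (fun u => (V u) ^ (1 - δ))
        (deriv V s * (1 - δ) * (V s) ^ (1 - δ - 1)) s :=
      hV'.rpow_const (Or.inl (ne_of_gt hVspos))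
    have hinner : HasDerivAt (fun u => Ω₂ + Ω₁ * (V u) ^ (1 - δ))
        (Ω₁ * (deriv V s * (1 - δ) * (V s) ^ (1 - δ - 1))) s :=
      (hpow.const_mul Ω₁).const_add Ω₂
    have hlog : HasDerivAt g
        ((Ω₁ * (deriv V s * (1 - δ) * (V s) ^ (1 - δ - 1))) /
          (Ω₂ + Ω₁ * (V s) ^ (1 - δ))) s :=
      hinner.log (ne_of_gt (hDpos s ⟨hs0, hs.2.le⟩))
    exact hlog.add ((hasDerivAt_id s).const_mul (Ω₁ * (1 - δ)))
  have hhderiv_nonpos : ∀ s ∈ Set.Ioo (0 : ℝ) t, deriv h s ≤ 0 := by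
    intro s hs
    have hd := hhd s hs
    rw [hd.deriv]
    have hs0 : (0:ℝ) ≤ s := hs.1.le
    have hVspos : 0 < V s := hVpos s ⟨hs0, hs.2.le⟩
    set D : ℝ := Ω₂ + Ω₁ * (V s) ^ (1 - δ) with hD
    have hDp : 0 < D := hDpos s ⟨hs0, hs.2.le⟩
    have key : Ω₁ * (deriv V s * (1 - δ) * (V s) ^ (1 - δ - 1)) ≤
        -(Ω₁ * (1 - δ)) * D := by
      have hineq := hVineq s hs0
      have hpownn : 0 ≤ (V s) ^ (1 - δ - 1) := Real.rpow_nonneg hVspos.le _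
      have hmul : Ω₁ * (1 - δ) * (V s) ^ (1 - δ - 1) * deriv V s ≤
          Ω₁ * (1 - δ) * (V s) ^ (1 - δ - 1) * (-Ω₁ * V s - Ω₂ * (V s) ^ δ) := by
        apply mul_le_mul_of_nonneg_left hineq
        positivity
      have e1 : (V s) ^ (1 - δ - 1) * V s = (V s) ^ (1 - δ) := by
        have h := Real.rpow_add hVspos (1 - δ - 1) 1
        rw [Real.rpow_one] at h
        rw [← h]
        norm_num
        congr 1
        ring
      have e2 : (V s) ^ (1 - δ - 1) * (V s) ^ δ = 1 := by
        rw [← Real.rpow_add hVspos]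
        norm_num
      calc Ω₁ * (deriv V s * (1 - δ) * (V s) ^ (1 - δ - 1))
          = Ω₁ * (1 - δ) * (V s) ^ (1 - δ - 1) * deriv V s := by ring
        _ ≤ Ω₁ * (1 - δ) * (V s) ^ (1 - δ - 1) * (-Ω₁ * V s - Ω₂ * (V s) ^ δ) :=
            hmul
        _ = -(Ω₁ * (1 - δ)) * (Ω₂ * ((V s) ^ (1 - δ - 1) * (V s) ^ δ)
              + Ω₁ * ((V s) ^ (1 - δ - 1) * V s)) := by ring
        _ = -(Ω₁ * (1 - δ)) * D := by rw [e1, e2, hD]; ring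
    have hdiv : Ω₁ * (deriv V s * (1 - δ) * (V s) ^ (1 - δ - 1)) / D ≤
        -(Ω₁ * (1 - δ)) := by
      rw [div_le_iff₀ hDp]
      calc Ω₁ * (deriv V s * (1 - δ) * (V s) ^ (1 - δ - 1))
          ≤ -(Ω₁ * (1 - δ)) * D := key
        _ = -(Ω₁ * (1 - δ)) * D := rfl
    linarith
  have hhcont : ContinuousOn h (Set.Icc 0 t) := by
    apply ContinuousOn.add
    · apply ContinuousOn.log
      · apply ContinuousOn.add continuousOn_const
        apply ContinuousOn.mul continuousOn_const
        apply ContinuousOn.rpow_const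
        · exact fun s hs => (hVdiff s hs.1).continuousAt.continuousWithinAt
        · intro s hs; right; linarith
      · exact fun s hs => ne_of_gt (hDpos s hs)
    · exact (continuous_const.mul continuous_id).continuousOn
  have hhanti : AntitoneOn h (Set.Icc 0 t) := by
    apply antitoneOn_of_deriv_nonpos (convex_Icc 0 t) hhcont
    · rw [interior_Icc]
      exact fun s hs => (hhd s hs).differentiableAt.differentiableWithinAt
    · rw [interior_Icc]
      exact hhderiv_nonpos
  have hfinal : h t ≤ h 0 :=
    hhanti (Set.left_mem_Icc.2 htnonneg) ⟨htnonneg, le_rfl⟩ htnonneg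
  -- now the contradiction
  have hgt : Real.log Ω₂ < g t := by
    apply Real.log_lt_log hΩ₂
    have : 0 < (V t) ^ (1 - δ) := Real.rpow_pos_of_pos hVtpos _
    nlinarith
  have hg0 : g 0 = Real.log Ω₂ + L := by
    have e : Ω₂ + Ω₁ * (V 0) ^ (1 - δ) = Ω₂ * (1 + (Ω₁ / Ω₂) * (V 0) ^ (1 - δ)) := by
      field_simp
    have hp : (0:ℝ) < 1 + (Ω₁ / Ω₂) * (V 0) ^ (1 - δ) := by
      have : 0 ≤ (Ω₁ / Ω₂) * (V 0) ^ (1 - δ) :=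
        mul_nonneg (div_nonneg hΩ₁.le hΩ₂.le) hV0pow
      linarith
    show Real.log (Ω₂ + Ω₁ * (V 0) ^ (1 - δ)) = Real.log Ω₂ + L
    rw [e, Real.log_mul (ne_of_gt hΩ₂) (ne_of_gt hp), hL]
  -- h t ≤ h 0 means g t + c t ≤ g 0
  have hmain : g t + (Ω₁ * (1 - δ)) * t ≤ Real.log Ω₂ + L := by
    have h1 : h t = g t + (Ω₁ * (1 - δ)) * t := rfl
    have h2 : h 0 = g 0 + (Ω₁ * (1 - δ)) * 0 := rfl
    rw [h1, h2, hg0] at hfinal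
    linarith
  have hlt : (Ω₁ * (1 - δ)) * t < L := by linarith
  have hge : L ≤ (Ω₁ * (1 - δ)) * t := by
    have := mul_le_mul_of_nonneg_left hts hc.le
    calc L = (Ω₁ * (1 - δ)) * ((1 / (Ω₁ * (1 - δ))) * L) := by
            field_simp
      _ ≤ (Ω₁ * (1 - δ)) * t := this
  linarith
end

section
/- Let Ω₁ > 0, Ω₂ > 0, δ ∈ (0,1) and V₀ > 0. Define t_s = (1/(Ω₁(1−δ))) · ln(1 + (Ω₁/Ω₂) · V₀^{1−δ}) and, for t ∈ [0, t_s], define y(t) = ((V₀^{1−δ} + Ω₂/Ω₁) · e^{−Ω₁(1−δ)t} − Ω₂/Ω₁)^{1/(1−δ)}. Then y(0) = V₀, y(t_s) = 0, y(t) > 0 for t ∈ [0, t_s), and y is differentiable on [0, t_s) with y'(t) = −Ω₁ y(t) − Ω₂ y(t)^δ for all t ∈ [0, t_s). -/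
/-- Explicit solution of the comparison ODE `V' = -Ω₁ V - Ω₂ V^δ` underlying
the settling-time estimate of equation (38):
`y(t) = ((V₀^(1-δ) + Ω₂/Ω₁) e^{-Ω₁(1-δ)t} - Ω₂/Ω₁)^{1/(1-δ)}` satisfies
`y(0) = V₀`, `y(tₛ) = 0`, `y > 0` on `[0, tₛ)`, and solves the ODE on `[0, tₛ)`. -/
theorem comparison_ode_solution
    (Ω₁ Ω₂ δ V₀ : ℝ) (hΩ₁ : 0 < Ω₁) (hΩ₂ : 0 < Ω₂)
    (hδ : δ ∈ Set.Ioo (0 : ℝ) 1) (hV₀ : 0 < V₀)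
    (ts : ℝ)
    (hts : ts = (1 / (Ω₁ * (1 - δ))) * Real.log (1 + (Ω₁ / Ω₂) * V₀ ^ (1 - δ)))
    (y : ℝ → ℝ)
    (hy : ∀ t, y t =
      ((V₀ ^ (1 - δ) + Ω₂ / Ω₁) * Real.exp (-Ω₁ * (1 - δ) * t) - Ω₂ / Ω₁)
        ^ (1 / (1 - δ))) :
    y 0 = V₀ ∧ y ts = 0 ∧
      (∀ t, 0 ≤ t → t < ts → 0 < y t) ∧
      (∀ t, 0 ≤ t → t < ts →
        HasDerivAt y (-Ω₁ * y t - Ω₂ * (y t) ^ δ) t) := by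
  obtain ⟨hδ0, hδ1⟩ := hδ
  have h1δ : 0 < 1 - δ := by linarith
  set p : ℝ := 1 / (1 - δ) with hp
  set k : ℝ := Ω₁ * (1 - δ) with hk
  set c : ℝ := Ω₂ / Ω₁ with hc
  have hcpos : 0 < c := div_pos hΩ₂ hΩ₁
  have hV1 : 0 < V₀ ^ (1 - δ) := Real.rpow_pos_of_pos hV₀ _
  set a : ℝ := V₀ ^ (1 - δ) + c with ha
  have hapos : 0 < a := by positivity
  have hkpos : 0 < k := mul_pos hΩ₁ h1δ
  have hppos : 0 < p := by positivity
  have hu_eq : ∀ t, y t = (a * Real.exp (-k * t) - c) ^ p := by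
    intro t
    rw [hy t]
    congr 3
    rw [hk]; ring
  have hfrac : 1 + Ω₁ / Ω₂ * V₀ ^ (1 - δ) = a / c := by
    rw [ha, hc]
    field_simp
    ring
  have hexp : Real.exp (-k * ts) = c / a := by
    rw [hts, hk]
    have harg : -(Ω₁ * (1 - δ)) * (1 / (Ω₁ * (1 - δ)) *
        Real.log (1 + Ω₁ / Ω₂ * V₀ ^ (1 - δ))) = - Real.log (a / c) := by
      rw [hfrac]
      field_simp
    rw [harg, Real.exp_neg, Real.exp_log (by positivity), inv_div]
  -- y 0 = V₀
  have h0 : y 0 = V₀ := by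
    rw [hu_eq 0]
    have h1 : a * Real.exp (-k * 0) - c = V₀ ^ (1 - δ) := by simp [ha]
    rw [h1, ← Real.rpow_mul hV₀.le,
      show (1 - δ) * p = 1 by rw [hp]; field_simp, Real.rpow_one]
  -- y ts = 0
  have hts0 : y ts = 0 := by
    rw [hu_eq ts, hexp]
    have h1 : a * (c / a) - c = 0 := by field_simp; ring
    rw [h1, Real.zero_rpow (ne_of_gt hppos)]
  have hu_pos : ∀ t, t < ts → 0 < a * Real.exp (-k * t) - c := by
    intro t ht
    have h1 : Real.exp (-k * ts) < Real.exp (-k * t) :=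
      Real.exp_lt_exp.mpr (by nlinarith)
    rw [hexp] at h1
    have h2 := (div_lt_iff₀ hapos).mp h1
    nlinarith
  refine ⟨h0, hts0, fun t _ ht => by
    rw [hu_eq t]; exact Real.rpow_pos_of_pos (hu_pos t ht) _, ?_⟩
  intro t _ ht
  have hu := hu_pos t ht
  set u : ℝ := a * Real.exp (-k * t) - c with hudef
  have hinner : HasDerivAt (fun s => a * Real.exp (-k * s) - c)
      (a * Real.exp (-k * t) * (-k)) t := by
    have h1 : HasDerivAt (fun s : ℝ => -k * s) (-k) t := by
      simpa using (hasDerivAt_id t).const_mul (-k)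
    simpa [mul_assoc] using ((h1.exp).const_mul a).sub_const c
  have houter : HasDerivAt (fun x : ℝ => x ^ p) (p * u ^ (p - 1)) u :=
    Real.hasDerivAt_rpow_const (Or.inl (ne_of_gt hu))
  have hcomp : HasDerivAt (fun s => (a * Real.exp (-k * s) - c) ^ p)
      (p * u ^ (p - 1) * (a * Real.exp (-k * t) * (-k))) t :=
    by have := houter.comp t hinner; exact this
  have hyfun : y = fun s => (a * Real.exp (-k * s) - c) ^ p := funext hu_eq
  rw [← hyfun] at hcomp
  convert hcomp using 1
  have hyt : y t = u ^ p := hu_eq t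
  have hae : a * Real.exp (-k * t) = u + c := by rw [hudef]; ring
  have hupδ : (u ^ p) ^ δ = u ^ (p - 1) := by
    rw [← Real.rpow_mul hu.le]
    congr 1
    rw [hp]; field_simp; ring
  have hup : u ^ (p - 1) * u = u ^ p := by
    rw [← Real.rpow_add_one (ne_of_gt hu) (p - 1)]
    congr 1; ring
  have hpk : p * k = Ω₁ := by rw [hp, hk]; field_simp
  have hΩ₂c : Ω₁ * c = Ω₂ := by rw [hc]; field_simp
  rw [hyt, hupδ, hae]
  linear_combination (p * k) * hup + (u ^ p + c * u ^ (p - 1)) * hpk +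
    u ^ (p - 1) * hΩ₂c
end

section
/- Let n ≥ 1, let r ∈ (0,1], let s ∈ ℝⁿ, let k₁,…,k_n be real numbers with kᵢ ≥ k_min > 0 for all i, and let M be a symmetric n×n real matrix such that xᵀMx ≤ m̄‖x‖² for every x ∈ ℝⁿ, where m̄ > 0 and ‖·‖ is the Euclidean norm. Then ∑ᵢ kᵢ |sᵢ|^{r+1} ≥ k_min · (2/m̄)^{(1+r)/2} · ((1/2) sᵀMs)^{(1+r)/2}, where the right-hand side is taken to be 0 if sᵀMs ≤ 0. -/
open Matrix

lemma sum_rpow_superadd {ι : Type*} (t : Finset ι) (a : ι → ℝ) (ha : ∀ i, 0 ≤ a i)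
    {p : ℝ} (hp0 : 0 < p) (hp1 : p ≤ 1) :
    (∑ i ∈ t, a i) ^ p ≤ ∑ i ∈ t, a i ^ p := by
  classical
  induction t using Finset.induction_on with
  | empty => simp [Real.zero_rpow hp0.ne']
  | insert _ _ hx ih =>
    rename_i i t'
    rw [Finset.sum_insert hx, Finset.sum_insert hx]
    have hs : 0 ≤ ∑ j ∈ t', a j := Finset.sum_nonneg fun j _ => ha j
    have h1 : (a i + ∑ j ∈ t', a j) ^ p ≤ a i ^ p + (∑ j ∈ t', a j) ^ p := by
      have := NNReal.rpow_add_le_add_rpow ⟨a i, ha i⟩ ⟨_, hs⟩ hp0.le hp1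
      have h2 := NNReal.coe_le_coe.2 this
      push_cast at h2
      exact h2
    exact h1.trans (by linarith)

/-- Key inequality (35) of the paper: the dissipation term `∑ᵢ kᵢ |sᵢ|^{r+1}`
is bounded below by `γ V^λ` with `λ = (1+r)/2`, `γ = k_min (2/m̄)^λ` and
`V = (1/2) sᵀ M s`, where the symmetric matrix `M` satisfies `xᵀMx ≤ m̄ ‖x‖²`
(Property 1).  The right-hand side is taken to be `0` when `sᵀMs ≤ 0`. -/
theorem dissipation_lower_bound
    (n : ℕ) (hn : 1 ≤ n) (r : ℝ) (hr : r ∈ Set.Ioc (0 : ℝ) 1)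
    (s : Fin n → ℝ) (k : Fin n → ℝ) (kmin : ℝ)
    (hkmin : 0 < kmin) (hk : ∀ i, kmin ≤ k i)
    (M : Matrix (Fin n) (Fin n) ℝ) (hMsymm : M.IsSymm)
    (mbar : ℝ) (hmbar : 0 < mbar)
    (hMbound : ∀ x : Fin n → ℝ, x ⬝ᵥ M.mulVec x ≤ mbar * (∑ i, (x i) ^ 2)) :
    (if 0 ≤ s ⬝ᵥ M.mulVec s then
        kmin * (2 / mbar) ^ ((1 + r) / 2) *
          ((1 / 2) * (s ⬝ᵥ M.mulVec s)) ^ ((1 + r) / 2)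
      else 0)
      ≤ ∑ i, k i * |s i| ^ (r + 1) := by
  obtain ⟨hr0, hr1⟩ := hr
  set p : ℝ := (1 + r) / 2 with hp
  have hp0 : 0 < p := by positivity
  have hp1 : p ≤ 1 := by rw [hp]; linarith
  have hsum_nonneg : ∀ i : Fin n, (0:ℝ) ≤ |s i| ^ (r + 1) := fun i =>
    Real.rpow_nonneg (abs_nonneg _) _
  have hRHS : (∑ i, kmin * |s i| ^ (r + 1)) ≤ ∑ i, k i * |s i| ^ (r + 1) :=
    Finset.sum_le_sum fun i _ => mul_le_mul_of_nonneg_right (hk i) (hsum_nonneg i)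
  split_ifs with hpos
  · -- main case
    have hV : (2 / mbar) * ((1 / 2) * (s ⬝ᵥ M.mulVec s)) ≤ ∑ i, (s i) ^ 2 := by
      have := hMbound s
      have h2 : (2 / mbar) * ((1 / 2) * (s ⬝ᵥ M.mulVec s)) = (s ⬝ᵥ M.mulVec s) / mbar := by
        field_simp
      rw [h2, div_le_iff₀ hmbar]
      linarith [hMbound s]
    have hbase_nonneg : (0:ℝ) ≤ (2 / mbar) * ((1 / 2) * (s ⬝ᵥ M.mulVec s)) := by positivity
    have hstep1 : (2 / mbar) ^ p * ((1 / 2) * (s ⬝ᵥ M.mulVec s)) ^ p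
        ≤ (∑ i, (s i) ^ 2) ^ p := by
      rw [← Real.mul_rpow (by positivity) (by positivity)]
      exact Real.rpow_le_rpow hbase_nonneg hV hp0.le
    have hstep2 : (∑ i, (s i) ^ 2) ^ p ≤ ∑ i, |s i| ^ (r + 1) := by
      have h := sum_rpow_superadd Finset.univ (fun i => (s i) ^ 2)
        (fun i => sq_nonneg _) hp0 hp1
      refine h.trans_eq (Finset.sum_congr rfl fun i _ => ?_)
      show (s i ^ 2) ^ p = |s i| ^ (r + 1)
      rw [← sq_abs, ← Real.rpow_natCast |s i| 2, ← Real.rpow_mul (abs_nonneg _)]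
      norm_num [hp]
      ring_nf
    calc kmin * (2 / mbar) ^ p * ((1 / 2) * (s ⬝ᵥ M.mulVec s)) ^ p
        = kmin * ((2 / mbar) ^ p * ((1 / 2) * (s ⬝ᵥ M.mulVec s)) ^ p) := by ring
      _ ≤ kmin * ∑ i, |s i| ^ (r + 1) :=
          mul_le_mul_of_nonneg_left (hstep1.trans hstep2) hkmin.le
      _ = ∑ i, kmin * |s i| ^ (r + 1) := by rw [Finset.mul_sum]
      _ ≤ _ := hRHS
  · exact Finset.sum_nonneg fun i _ =>
      mul_nonneg (hkmin.le.trans (hk i)) (hsum_nonneg i)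
end

section
/- Let n ≥ 1. Let M, B : ℝ → (n×n real matrices) with M differentiable and M(t) symmetric for all t, and suppose M'(t) − 2B(t) is skew-symmetric for every t. Let q, q_d : ℝ → ℝⁿ be twice differentiable, let w : ℝ → ℝⁿ be differentiable, and let G, K : ℝ → ℝⁿ. Define e = q − q_d, s = e' + w, and suppose the input τ is the equivalent control τ(t) = −M(t)(w'(t) − q_d''(t)) − B(t)(s(t) − q'(t)) + G(t) + K(t), and that the dynamics M(t)q''(t) + B(t)q'(t) + G(t) + K(t) = τ(t) holds for all t. Then V₁(t) = (1/2) s(t)ᵀ M(t) s(t) has identically vanishing derivative: V₁'(t) = 0 for all t. -/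
open Matrix

/-! With the equivalent control the closed loop becomes `M ṡ = -B s`. Since `M` is symmetric,
`V̇₁ = ṡᵀ M s + ½ sᵀ Ṁ s = sᵀ (½ Ṁ - B) s`, the quadratic form of a skew-symmetric matrix,
which vanishes. -/

section Derivatives

variable {𝕜 ι : Type*} [NontriviallyNormedField 𝕜] [Fintype ι]
  {t : 𝕜} {u v : 𝕜 → ι → 𝕜} {du dv : ι → 𝕜}

theorem HasDerivAt.dotProduct (hu : HasDerivAt u du t) (hv : HasDerivAt v dv t) :
    HasDerivAt (fun x => u x ⬝ᵥ v x) (du ⬝ᵥ v t + u t ⬝ᵥ dv) t := by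
  have h := HasDerivAt.fun_sum (u := Finset.univ) fun i _ =>
    (hasDerivAt_pi.1 hu i).mul (hasDerivAt_pi.1 hv i)
  rwa [Finset.sum_add_distrib] at h

theorem HasDerivAt.mulVec {M : 𝕜 → Matrix ι ι 𝕜} {M' : Matrix ι ι 𝕜}
    (hM : ∀ i j, HasDerivAt (fun x => M x i j) (M' i j) t) (hv : HasDerivAt v dv t) :
    HasDerivAt (fun x => M x *ᵥ v x) (M' *ᵥ v t + M t *ᵥ dv) t :=
  hasDerivAt_pi.2 fun i => (hasDerivAt_pi.2 (hM i)).dotProduct hv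

end Derivatives

section QuadraticForms

variable {R ι : Type*} [Fintype ι]

theorem Matrix.IsSymm.dotProduct_mulVec_comm [CommSemiring R] {A : Matrix ι ι R} (hA : A.IsSymm)
    (x y : ι → R) : x ⬝ᵥ A *ᵥ y = y ⬝ᵥ A *ᵥ x := by
  rw [dotProduct_mulVec, ← hA.eq, vecMul_transpose, dotProduct_comm, hA.eq]

theorem Matrix.dotProduct_mulVec_self_eq_zero_of_transpose_eq_neg [CommRing R] [NoZeroDivisors R]
    [CharZero R] {A : Matrix ι ι R} (hA : Aᵀ = -A) (x : ι → R) : x ⬝ᵥ A *ᵥ x = 0 := by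
  refine CharZero.eq_neg_self_iff.1 ?_
  conv_lhs => rw [dotProduct_mulVec, ← mulVec_transpose, hA, neg_mulVec, neg_dotProduct,
    dotProduct_comm]

end QuadraticForms

section SlidingMode

variable {R ι : Type*} [Fintype ι] [CommRing R]

theorem mulVec_sliding_deriv_of_equivalent_control {M B : Matrix ι ι R}
    {G K dw ddqd s dq ddq : ι → R}
    (h : M *ᵥ ddq + B *ᵥ dq + G + K = -(M *ᵥ (dw - ddqd)) - B *ᵥ (s - dq) + G + K) :
    M *ᵥ (ddq - ddqd + dw) = -(B *ᵥ s) := by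
  rw [mulVec_sub, mulVec_sub] at h
  rw [mulVec_add, mulVec_sub]
  linear_combination h

theorem sliding_lyapunov_deriv_eq_zero [NoZeroDivisors R] [CharZero R] {M M' B : Matrix ι ι R}
    {s ds : ι → R} (hM : M.IsSymm) (hskew : (M' - 2 • B)ᵀ = -(M' - 2 • B))
    (hds : M *ᵥ ds = -(B *ᵥ s)) :
    ds ⬝ᵥ M *ᵥ s + s ⬝ᵥ (M' *ᵥ s + M *ᵥ ds) = 0 := by
  have hskew0 := dotProduct_mulVec_self_eq_zero_of_transpose_eq_neg hskew s
  rw [sub_mulVec, dotProduct_sub, smul_mulVec, dotProduct_smul] at hskew0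
  rw [hM.dotProduct_mulVec_comm ds s, dotProduct_add, hds, dotProduct_neg]
  linear_combination hskew0

end SlidingMode

theorem equivalent_control_keeps_sliding_manifold_general
    (n : ℕ)
    (M M' B : ℝ → Matrix (Fin n) (Fin n) ℝ)
    (hMderiv : ∀ t i j, HasDerivAt (fun u => M u i j) (M' t i j) t)
    (hMsymm : ∀ t, (M t).IsSymm)
    (hskew : ∀ t, (M' t - 2 • B t)ᵀ = -(M' t - 2 • B t))
    (q' q'' qd' qd'' w w' : ℝ → Fin n → ℝ)
    (hq' : ∀ t, HasDerivAt q' (q'' t) t)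
    (hqd' : ∀ t, HasDerivAt qd' (qd'' t) t)
    (hw : ∀ t, HasDerivAt w (w' t) t)
    (G K τ : ℝ → Fin n → ℝ)
    (s : ℝ → Fin n → ℝ)
    (hs : ∀ t, s t = (q' t - qd' t) + w t)
    (hτ : ∀ t, τ t = -(M t).mulVec (w' t - qd'' t) -
      (B t).mulVec (s t - q' t) + G t + K t)
    (hdyn : ∀ t, (M t).mulVec (q'' t) + (B t).mulVec (q' t) + G t + K t = τ t)
    (V₁ : ℝ → ℝ)
    (hV₁ : ∀ t, V₁ t = (1 / 2) * (s t ⬝ᵥ (M t).mulVec (s t))) :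
    ∀ t, HasDerivAt V₁ 0 t := by
  intro t
  have hs_deriv : HasDerivAt s (q'' t - qd'' t + w' t) t := by
    rw [funext hs]
    exact ((hq' t).sub (hqd' t)).add (hw t)
  have hclosed := mulVec_sliding_deriv_of_equivalent_control (hτ t ▸ hdyn t)
  have hV := (hs_deriv.dotProduct (HasDerivAt.mulVec (hMderiv t) hs_deriv)).const_mul (1 / 2 : ℝ)
  rw [sliding_lyapunov_deriv_eq_zero (hMsymm t) (hskew t) hclosed, mul_zero] at hV
  rwa [funext hV₁]

/-- Equation (17): under the equivalent control law
`τ = −M(ẇ − q̈_d) − B(s − q̇) + G + K` for the exactly-known dynamics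
`M q̈ + B q̇ + G + K = τ` with `Ṁ − 2B` skew-symmetric (Property 2), the
Lyapunov function `V₁ = (1/2) sᵀ M s` of the sliding variable `s = ė + w`
has identically vanishing derivative. -/
theorem equivalent_control_keeps_sliding_manifold
    (n : ℕ) (hn : 1 ≤ n)
    (M M' B : ℝ → Matrix (Fin n) (Fin n) ℝ)
    (hMderiv : ∀ t i j, HasDerivAt (fun u => M u i j) (M' t i j) t)
    (hMsymm : ∀ t, (M t).IsSymm)
    (hskew : ∀ t, (M' t - 2 • B t)ᵀ = -(M' t - 2 • B t))
    (q q' q'' qd qd' qd'' w w' : ℝ → Fin n → ℝ)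
    (hq : ∀ t, HasDerivAt q (q' t) t) (hq' : ∀ t, HasDerivAt q' (q'' t) t)
    (hqd : ∀ t, HasDerivAt qd (qd' t) t) (hqd' : ∀ t, HasDerivAt qd' (qd'' t) t)
    (hw : ∀ t, HasDerivAt w (w' t) t)
    (G K τ : ℝ → Fin n → ℝ)
    (e s : ℝ → Fin n → ℝ)
    (he : ∀ t, e t = q t - qd t)
    (hs : ∀ t, s t = (q' t - qd' t) + w t)
    (hτ : ∀ t, τ t = -(M t).mulVec (w' t - qd'' t) -
      (B t).mulVec (s t - q' t) + G t + K t)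
    (hdyn : ∀ t, (M t).mulVec (q'' t) + (B t).mulVec (q' t) + G t + K t = τ t)
    (V₁ : ℝ → ℝ)
    (hV₁ : ∀ t, V₁ t = (1 / 2) * (s t ⬝ᵥ (M t).mulVec (s t))) :
    ∀ t, HasDerivAt V₁ 0 t :=
  equivalent_control_keeps_sliding_manifold_general n M M' B hMderiv hMsymm hskew q' q'' qd' qd'' w
    w' hq' hqd' hw G K τ s hs hτ hdyn V₁ hV₁
end

section
/- Let n ≥ 1 and ξ > 0. Let M, B : ℝ → (n×n real matrices) with M differentiable and M(t) symmetric for all t, and suppose M'(t) − 2B(t) is skew-symmetric for every t. Let q, q_d : ℝ → ℝⁿ be twice differentiable, w : ℝ → ℝⁿ differentiable, G, ρ : ℝ → ℝⁿ, and let K ∈ ℝⁿ be a constant vector. Define e = q − q_d and s = e' + w. Let K̂ : ℝ → ℝⁿ be differentiable with adaptive law K̂'(t) = −ξ s(t), and suppose the control input τ(t) = −M(t)(w'(t) − q_d''(t)) − B(t)(s(t) − q'(t)) + G(t) + K̂(t) − ρ(t) together with the dynamics M(t)q''(t) + B(t)q'(t) + G(t) + K = τ(t) holds for all t. Then the augmented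 Lyapunov function V₂(t) = (1/2) s(t)ᵀ M(t) s(t) + (1/(2ξ))‖K − K̂(t)‖² satisfies V₂'(t) = −s(t)ᵀ ρ(t) for all t. -/
open Matrix

/-- `xᵀ A y = yᵀ Aᵀ x`. -/
lemma dot_mulVec_transpose {n : ℕ} (A : Matrix (Fin n) (Fin n) ℝ)
    (x y : Fin n → ℝ) : x ⬝ᵥ A.mulVec y = y ⬝ᵥ Aᵀ.mulVec x := by
  simp only [dotProduct, Matrix.mulVec, Matrix.transpose_apply, Finset.mul_sum]
  rw [Finset.sum_comm]
  exact Finset.sum_congr rfl fun j _ => Finset.sum_congr rfl fun i _ => by ring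

/-- `xᵀ A y = yᵀ A x` for a symmetric matrix `A`. -/
lemma dot_mulVec_symm {n : ℕ} (A : Matrix (Fin n) (Fin n) ℝ) (hA : Aᵀ = A)
    (x y : Fin n → ℝ) : x ⬝ᵥ A.mulVec y = y ⬝ᵥ A.mulVec x := by
  rw [dot_mulVec_transpose, hA]

/-- `xᵀ C x = 0` for a skew-symmetric matrix `C`. -/
lemma dot_mulVec_skew {n : ℕ} (C : Matrix (Fin n) (Fin n) ℝ) (hC : Cᵀ = -C)
    (x : Fin n → ℝ) : x ⬝ᵥ C.mulVec x = 0 := by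
  have h : x ⬝ᵥ C.mulVec x = x ⬝ᵥ Cᵀ.mulVec x := dot_mulVec_transpose C x x
  rw [hC, Matrix.neg_mulVec, dotProduct_neg] at h
  linarith

/-- Adaptive Lyapunov analysis of equations (23)–(26): with constant lumped
uncertainty-and-fault term `K`, adaptive estimate `K̂` obeying the adaptive law
`K̂' = −ξ s`, and control
`τ = −M(ẇ − q̈_d) − B(s − q̇) + G + K̂ − ρ` for the dynamics
`M q̈ + B q̇ + G + K = τ` with `Ṁ − 2B` skew-symmetric (Property 2), the
augmented Lyapunov function
`V₂ = (1/2) sᵀ M s + (1/(2ξ)) ‖K − K̂‖²` satisfies `V̇₂ = −sᵀ ρ`. -/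
theorem adaptive_lyapunov_derivative
    (n : ℕ) (hn : 1 ≤ n) (ξ : ℝ) (hξ : 0 < ξ)
    (M M' B : ℝ → Matrix (Fin n) (Fin n) ℝ)
    (hMderiv : ∀ t i j, HasDerivAt (fun u => M u i j) (M' t i j) t)
    (hMsymm : ∀ t, (M t).IsSymm)
    (hskew : ∀ t, (M' t - 2 • B t)ᵀ = -(M' t - 2 • B t))
    (q q' q'' qd qd' qd'' w w' : ℝ → Fin n → ℝ)
    (hq : ∀ t, HasDerivAt q (q' t) t) (hq' : ∀ t, HasDerivAt q' (q'' t) t)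
    (hqd : ∀ t, HasDerivAt qd (qd' t) t) (hqd' : ∀ t, HasDerivAt qd' (qd'' t) t)
    (hw : ∀ t, HasDerivAt w (w' t) t)
    (G ρ : ℝ → Fin n → ℝ) (K : Fin n → ℝ)
    (e s : ℝ → Fin n → ℝ)
    (he : ∀ t, e t = q t - qd t)
    (hs : ∀ t, s t = (q' t - qd' t) + w t)
    (Khat : ℝ → Fin n → ℝ)
    (hKhat : ∀ t, HasDerivAt Khat (-ξ • s t) t)
    (τ : ℝ → Fin n → ℝ)
    (hτ : ∀ t, τ t = -(M t).mulVec (w' t - qd'' t) -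
      (B t).mulVec (s t - q' t) + G t + Khat t - ρ t)
    (hdyn : ∀ t, (M t).mulVec (q'' t) + (B t).mulVec (q' t) + G t + K = τ t)
    (V₂ : ℝ → ℝ)
    (hV₂ : ∀ t, V₂ t = (1 / 2) * (s t ⬝ᵥ (M t).mulVec (s t)) +
      (1 / (2 * ξ)) * ∑ i, (K i - Khat t i) ^ 2) :
    ∀ t, HasDerivAt V₂ (-(s t ⬝ᵥ ρ t)) t := by
  intro t
  -- componentwise derivative of s
  set a : Fin n → ℝ := s t with ha
  set a' : Fin n → ℝ := q'' t - qd'' t + w' t with ha'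
  have hsvec : HasDerivAt s a' t := by
    have h : HasDerivAt (fun u => (q' u - qd' u) + w u) a' t :=
      ((hq' t).sub (hqd' t)).add (hw t)
    have hfun : s = fun u => (q' u - qd' u) + w u := funext fun u => hs u
    rw [hfun]; exact h
  have hsd : ∀ i, HasDerivAt (fun u => s u i) (a' i) t := fun i =>
    (hasDerivAt_pi.mp hsvec) i
  have hKd : ∀ i, HasDerivAt (fun u => Khat u i) (-ξ * a i) t := by
    intro i
    have := (hasDerivAt_pi.mp (hKhat t)) i
    simpa using this
  -- derivative of the quadratic part
  have hquad : HasDerivAt (fun u => s u ⬝ᵥ (M u).mulVec (s u))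
      (a' ⬝ᵥ (M t).mulVec a + (a ⬝ᵥ (M' t).mulVec a + a ⬝ᵥ (M t).mulVec a')) t := by
    have hsum : HasDerivAt (fun u => ∑ i, s u i * ∑ j, M u i j * s u j)
        (∑ i, (a' i * ∑ j, M t i j * a j +
          a i * ∑ j, (M' t i j * a j + M t i j * a' j))) t := by
      apply HasDerivAt.fun_sum
      intro i _
      exact (hsd i).mul (HasDerivAt.fun_sum fun j _ => (hMderiv t i j).mul (hsd j))
    have heq : (∑ i, (a' i * ∑ j, M t i j * a j +
          a i * ∑ j, (M' t i j * a j + M t i j * a' j)))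
        = a' ⬝ᵥ (M t).mulVec a + (a ⬝ᵥ (M' t).mulVec a + a ⬝ᵥ (M t).mulVec a') := by
      simp only [dotProduct, Matrix.mulVec, Finset.sum_add_distrib, mul_add]
    rw [← heq]
    simpa only [dotProduct, Matrix.mulVec] using hsum
  -- derivative of the adaptation part
  have hadapt : HasDerivAt (fun u => ∑ i, (K i - Khat u i) ^ 2)
      (∑ i, 2 * (K i - Khat t i) * (ξ * a i)) t := by
    apply HasDerivAt.fun_sum
    intro i _
    have h : HasDerivAt (fun u => (K i - Khat u i) ^ 2)
        ((2 : ℕ) * (K i - Khat t i) ^ 1 * (0 - (-ξ * a i))) t :=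
      ((hasDerivAt_const t (K i)).sub (hKd i)).pow 2
    refine h.congr_deriv ?_
    push_cast
    ring
  -- derivative of V₂
  have hV : HasDerivAt V₂
      ((1 / 2) * (a' ⬝ᵥ (M t).mulVec a + (a ⬝ᵥ (M' t).mulVec a + a ⬝ᵥ (M t).mulVec a'))
        + (1 / (2 * ξ)) * ∑ i, 2 * (K i - Khat t i) * (ξ * a i)) t := by
    have hfun : V₂ = fun u => (1 / 2) * (s u ⬝ᵥ (M u).mulVec (s u)) +
        (1 / (2 * ξ)) * ∑ i, (K i - Khat u i) ^ 2 := funext fun u => hV₂ u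
    rw [hfun]
    exact (hquad.const_mul _).add (hadapt.const_mul _)
  -- now show the derivative value equals -(s t ⬝ᵥ ρ t)
  have hMsym : a' ⬝ᵥ (M t).mulVec a = a ⬝ᵥ (M t).mulVec a' :=
    dot_mulVec_symm (M t) (hMsymm t) a' a
  have hBB : a ⬝ᵥ (M' t).mulVec a = 2 * (a ⬝ᵥ (B t).mulVec a) := by
    have h0 := dot_mulVec_skew (M' t - 2 • B t) (hskew t) a
    rw [Matrix.sub_mulVec, dotProduct_sub, Matrix.smul_mulVec,
      dotProduct_smul] at h0
    have h0' : a ⬝ᵥ (M' t).mulVec a - 2 * (a ⬝ᵥ (B t).mulVec a) = 0 := by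
      simpa using h0
    linarith
  have hMa' : (M t).mulVec a' = -(B t).mulVec a - ρ t - (K - Khat t) := by
    have h1 := hdyn t
    rw [hτ t] at h1
    have e1 : (M t).mulVec a' = (M t).mulVec (q'' t) + (M t).mulVec (w' t - qd'' t) := by
      rw [← Matrix.mulVec_add]
      congr 1
      rw [ha']
      abel
    have e2 : (B t).mulVec (s t - q' t) = (B t).mulVec (s t) - (B t).mulVec (q' t) :=
      Matrix.mulVec_sub _ _ _
    rw [e2, ← ha] at h1
    rw [e1]
    linear_combination h1
  have hdot : a ⬝ᵥ (M t).mulVec a' =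
      -(a ⬝ᵥ (B t).mulVec a) - a ⬝ᵥ ρ t - a ⬝ᵥ (K - Khat t) := by
    rw [hMa']
    simp [dotProduct_sub, dotProduct_neg]
  have hsum2 : (∑ i, 2 * (K i - Khat t i) * (ξ * a i)) = 2 * ξ * (a ⬝ᵥ (K - Khat t)) := by
    simp only [dotProduct, Pi.sub_apply, Finset.mul_sum]
    apply Finset.sum_congr rfl
    intro i _
    ring
  have : (1 / 2) * (a' ⬝ᵥ (M t).mulVec a + (a ⬝ᵥ (M' t).mulVec a + a ⬝ᵥ (M t).mulVec a'))
        + (1 / (2 * ξ)) * ∑ i, 2 * (K i - Khat t i) * (ξ * a i) = -(s t ⬝ᵥ ρ t) := by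
    rw [hMsym, hBB, hdot, hsum2, ← ha]
    field_simp
    ring
  rw [← this]
  exact hV
end

section
/- Let c₁ ≥ 0, c₂ > 0, p > 0, and η ∈ (0,1). Let e : [0,∞) → ℝ be differentiable and satisfy e'(t) = −c₁ |e(t)|^p sgn(e(t)) − c₂ |e(t)|^η sgn(e(t)) for all t ≥ 0. Then e(t) = 0 for every t ≥ |e(0)|^{1−η} / (c₂(1−η)). -/
private lemma sign_mul_self' (x : ℝ) : x * Real.sign x = |x| := by
  rcases lt_trichotomy x 0 with h|h|h
  · rw [Real.sign_of_neg h, abs_of_neg h]; ring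
  · simp [h]
  · rw [Real.sign_of_pos h, abs_of_pos h]; ring

/-- Finite-time convergence of the tracking error on the non-singular terminal
sliding mode manifold (equation (11)): a solution of the scalar ODE
`ė = −c₁ |e|^p sgn(e) − c₂ |e|^η sgn(e)` with `c₁ ≥ 0`, `c₂ > 0`, `p > 0`
and `0 < η < 1` reaches zero in finite time bounded by
`|e(0)|^(1−η) / (c₂ (1−η))`. -/
theorem terminal_sliding_mode_finite_time
    (c₁ c₂ p η : ℝ) (hc₁ : 0 ≤ c₁) (hc₂ : 0 < c₂) (hp : 0 < p)
    (hη : η ∈ Set.Ioo (0 : ℝ) 1)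
    (e : ℝ → ℝ)
    (hode : ∀ t, 0 ≤ t → HasDerivAt e
      (-c₁ * |e t| ^ p * Real.sign (e t) - c₂ * |e t| ^ η * Real.sign (e t)) t) :
    ∀ t, |e 0| ^ (1 - η) / (c₂ * (1 - η)) ≤ t → e t = 0 := by
  obtain ⟨hη0, hη1⟩ := hη
  have h1η : (0:ℝ) < 1 - η := by linarith
  set T : ℝ := |e 0| ^ (1 - η) / (c₂ * (1 - η)) with hT
  have hTnn : 0 ≤ T := by
    apply div_nonneg (Real.rpow_nonneg (abs_nonneg _) _)
    positivity
  -- V = e² is nonincreasing on [0, ∞)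
  have hV : ∀ s, 0 ≤ s → HasDerivAt (fun t => (e t)^2)
      (-2 * (c₁ * |e s| ^ p + c₂ * |e s| ^ η) * |e s|) s := by
    intro s hs
    have h := ((hode s hs).mul (hode s hs)).const_mul (1:ℝ)
    have := (hode s hs)
    have h2 : HasDerivAt (fun t => (e t)^2) (2 * e s *
        (-c₁ * |e s| ^ p * Real.sign (e s) - c₂ * |e s| ^ η * Real.sign (e s))) s := by
      simpa [mul_comm, mul_assoc, mul_left_comm] using
        ((hode s hs).fun_pow 2)
    convert h2 using 1
    rw [← sign_mul_self' (e s)]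
    ring
  have hVanti : AntitoneOn (fun t => (e t)^2) (Set.Ici (0:ℝ)) := by
    apply antitoneOn_of_deriv_nonpos (convex_Ici 0)
    · intro s hs; exact ((hV s hs).continuousAt).continuousWithinAt
    · intro s hs
      rw [interior_Ici] at hs
      exact (hV s (le_of_lt hs)).differentiableAt.differentiableWithinAt
    · intro s hs
      rw [interior_Ici] at hs
      rw [(hV s (le_of_lt hs)).deriv]
      have : 0 ≤ c₁ * |e s| ^ p + c₂ * |e s| ^ η := by positivity
      nlinarith [abs_nonneg (e s)]
  -- once zero, stays zero
  have hstay : ∀ t₀ t, 0 ≤ t₀ → t₀ ≤ t → e t₀ = 0 → e t = 0 := by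
    intro t₀ t ht₀ htt h0
    have := hVanti (Set.mem_Ici.2 ht₀) (Set.mem_Ici.2 (ht₀.trans htt)) htt
    simp only [h0] at this
    nlinarith [sq_nonneg (e t)]
  -- main: there is a zero in [0, T]
  have hzero : ∃ t₀ ∈ Set.Icc 0 T, e t₀ = 0 := by
    by_cases h0 : e 0 = 0
    · exact ⟨0, ⟨le_refl _, hTnn⟩, h0⟩
    by_contra hne
    push_neg at hne
    have hne' : ∀ s ∈ Set.Icc (0:ℝ) T, e s ≠ 0 := fun s hs => hne s hs
    have hTpos : 0 < T := by
      have : 0 < |e 0| ^ (1 - η) := Real.rpow_pos_of_pos (abs_pos.2 h0) _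
      rw [hT]
      positivity
    -- h = |e|^{1-η} + c₂(1-η) t is antitone on [0,T]
    set g : ℝ → ℝ := fun t => |e t| ^ (1 - η) + c₂ * (1 - η) * t with hg
    have hderiv : ∀ s ∈ Set.Icc (0:ℝ) T, HasDerivAt g
        (-(1 - η) * c₁ * |e s| ^ (p - η)) s := by
      intro s hs
      have hes : e s ≠ 0 := hne' s hs
      have habs : 0 < |e s| := abs_pos.2 hes
      -- derivative of t ↦ |e t|
      have hde := hode s hs.1
      have haderiv : HasDerivAt (fun t => |e t|)
          (Real.sign (e s) * (-c₁ * |e s| ^ p * Real.sign (e s)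
            - c₂ * |e s| ^ η * Real.sign (e s))) s := by
        rcases hes.lt_or_gt with hlt|hlt
        · have hev : ∀ᶠ t in nhds s, e t < 0 :=
            (hde.continuousAt).eventually (eventually_lt_nhds hlt)
          have : (fun t => |e t|) =ᶠ[nhds s] (fun t => -(e t)) := by
            filter_upwards [hev] with t ht; rw [abs_of_neg ht]
          refine HasDerivAt.congr_of_eventuallyEq ?_ this
          refine hde.fun_neg.congr_deriv ?_
          rw [Real.sign_of_neg hlt]
          ring
        · have hev : ∀ᶠ t in nhds s, 0 < e t :=
            (hde.continuousAt).eventually (eventually_gt_nhds hlt)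
          have : (fun t => |e t|) =ᶠ[nhds s] e := by
            filter_upwards [hev] with t ht; rw [abs_of_pos ht]
          refine HasDerivAt.congr_of_eventuallyEq ?_ this
          refine hde.congr_deriv ?_
          rw [Real.sign_of_pos hlt]
          ring
      have hsq : Real.sign (e s) * Real.sign (e s) = 1 := by
        rcases hes.lt_or_gt with hlt|hlt
        · rw [Real.sign_of_neg hlt]; ring
        · rw [Real.sign_of_pos hlt]; ring
      have hrpow : HasDerivAt (fun t => |e t| ^ (1 - η))
          ((Real.sign (e s) * (-c₁ * |e s| ^ p * Real.sign (e s)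
            - c₂ * |e s| ^ η * Real.sign (e s))) * (1 - η) * |e s| ^ (1 - η - 1)) s :=
        haderiv.rpow_const (Or.inl habs.ne')
      have hlin : HasDerivAt (fun t => c₂ * (1 - η) * t) (c₂ * (1 - η)) s := by
        simpa using (hasDerivAt_id s).const_mul (c₂ * (1 - η))
      have := hrpow.add hlin
      refine this.congr_deriv (Eq.symm ?_)
      have e1 : |e s| ^ η * |e s| ^ (1 - η - 1) = 1 := by
        rw [← Real.rpow_add habs]
        norm_num
      have e2 : |e s| ^ p * |e s| ^ (1 - η - 1) = |e s| ^ (p - η) := by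
        rw [← Real.rpow_add habs]
        congr 1
        ring
      linear_combination ((1 - η) * c₁ * |e s| ^ (1 - η - 1)) * hsq * (-c₁ * |e s| ^ p - c₂ * |e s| ^ η) * 0 + ((1 - η) * c₁) * e2 + ((1 - η) * c₂) * e1 + ((1 - η) * |e s| ^ (1 - η - 1) * (c₁ * |e s| ^ p + c₂ * |e s| ^ η)) * hsq
    have hanti : AntitoneOn g (Set.Icc 0 T) := by
      apply antitoneOn_of_deriv_nonpos (convex_Icc 0 T)
      · intro s hs; exact ((hderiv s hs).continuousAt).continuousWithinAt
      · intro s hs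
        rw [interior_Icc] at hs
        exact (hderiv s (Set.mem_Icc_of_Ioo hs)).differentiableAt.differentiableWithinAt
      · intro s hs
        rw [interior_Icc] at hs
        rw [(hderiv s (Set.mem_Icc_of_Ioo hs)).deriv]
        have h2 : (0:ℝ) ≤ (1 - η) * c₁ * |e s| ^ (p - η) :=
          mul_nonneg (mul_nonneg h1η.le hc₁) (Real.rpow_nonneg (abs_nonneg _) _)
        linarith
    have hle := hanti (Set.left_mem_Icc.2 hTnn) (Set.right_mem_Icc.2 hTnn) hTnn
    have hgT : g T = |e T| ^ (1 - η) + |e 0| ^ (1 - η) := by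
      simp only [hg, hT]
      field_simp
    have hpos : 0 < |e T| ^ (1 - η) :=
      Real.rpow_pos_of_pos (abs_pos.2 (hne' T ⟨hTnn, le_refl _⟩)) _
    simp only [hg] at hle
    rw [hT] at hle
    have : c₂ * (1 - η) * (|e 0| ^ (1 - η) / (c₂ * (1 - η))) = |e 0| ^ (1 - η) := by
      field_simp
    nlinarith
  obtain ⟨t₀, ht₀, h0⟩ := hzero
  intro t ht
  exact hstay t₀ t ht₀.1 (ht₀.2.trans ht) h0
end
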